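/- arXiv:2311.03877 — 9 statements merged into one kernel-verified Lean document; each statement's English description precedes it below -/
import Mathlib

section
/- Let T = (V, E, B, σ) be a 𝒞-consistent branching tree. Then for every x ∈ ⋂𝒞 there exists exactly one leaf v ∈ V (a node with no children) such that x ∈ ⋂(𝒞 ∪ ℬ_v). -/
open Set

/-- Apply a signed index list (index, sign) to a point, giving the vector
`(sign(i₁)·x_{|i₁|}, …, sign(i_k)·x_{|i_k|})` as a list of reals.
`true` encodes a positive sign, `false` a negative sign. -/
def sigApply {n : ℕ} (σ : List (Fin n × Bool)) (x : Fin n → ℝ) : List ℝ :=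
  σ.map (fun p => if p.2 then x p.1 else -(x p.1))

/-- Strict ε-lexicographic order `x ≻_ε y` on lists of reals:
`x ≠ y` and, at the first index where they differ, `x i ≥ y i + ε`. -/
def lexGt (ε : ℝ) : List ℝ → List ℝ → Prop
  | a :: as, b :: bs => (a = b ∧ lexGt ε as bs) ∨ (a ≠ b ∧ b + ε ≤ a)
  | _, _ => False

/-- A branching tree `T = (V, E, B, σ)`: a finite arborescence (encoded by a
parent map from which every node reaches the root), a branching constraint
`B v ⊆ ℝⁿ` for every node with `B r = ℝⁿ`, and a list `σ v` of signed variable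
indices with pairwise distinct absolute values for every node. -/
structure BranchingTree (n : ℕ) where
  V : Type
  fin : Fintype V
  root : V
  parent : V → Option V
  parent_root : parent root = none
  parent_isSome : ∀ v, v ≠ root → (parent v).isSome
  reach_root : ∀ v, Relation.ReflTransGen (fun a b => parent a = some b) v root
  B : V → Set (Fin n → ℝ)
  B_root : B root = Set.univ
  sig : V → List (Fin n × Bool)
  sig_nodup : ∀ v, ((sig v).map Prod.fst).Nodup

namespace BranchingTree

variable {n : ℕ} (T : BranchingTree n)

/-- The set of children `δ⁺(u)` of a node. -/
def children (u : T.V) : Set T.V := {v | T.parent v = some u}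

/-- A leaf is a node without children. -/
def IsLeaf (v : T.V) : Prop := T.children v = ∅

/-- The nodes on the root-to-`v` path (the ancestors of `v`, including `v`). -/
def pathNodes (v : T.V) : Set T.V :=
  {u | Relation.ReflTransGen (fun a b => T.parent a = some b) v u}

/-- `ℬ_v`: the branching constraints attached to the nodes on the root-to-`v` path. -/
def pathCons (v : T.V) : Set (Set (Fin n → ℝ)) := T.B '' T.pathNodes v

/-- Depth of a node: the number of nodes on its root path. -/
noncomputable def depth (v : T.V) : ℕ := (T.pathNodes v).ncard

/-- The feasible region `⋂(𝒞 ∪ ℬ_v)` of node `v`. -/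
def region (𝒞 : Set (Set (Fin n → ℝ))) (v : T.V) : Set (Fin n → ℝ) :=
  ⋂₀ (𝒞 ∪ T.pathCons v)

/-- `T` is `𝒞`-consistent: (T3) the children of any non-leaf cover `⋂𝒞`;
(T5) `σ u` is a prefix of `σ v` for every child `v` of `u`;
(T6) every entry of `σ v (x)` is bounded above over `x ∈ ⋂𝒞`;
(T7) distinct children of `u` have `σ u`-disjoint branching constraints. -/
def Consistent (𝒞 : Set (Set (Fin n → ℝ))) : Prop :=
  (∀ u : T.V, (T.children u).Nonempty → ⋂₀ 𝒞 ⊆ ⋃ v ∈ T.children u, T.B v) ∧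
  (∀ u v : T.V, v ∈ T.children u → T.sig u <+: T.sig v) ∧
  (∀ v : T.V, ∀ i : Fin (T.sig v).length,
    BddAbove ((fun x => if ((T.sig v).get i).2 then x ((T.sig v).get i).1
      else -(x ((T.sig v).get i).1)) '' ⋂₀ 𝒞)) ∧
  (∀ u v w : T.V, v ∈ T.children u → w ∈ T.children u → v ≠ w →
    sigApply (T.sig u) '' T.B v ∩ sigApply (T.sig u) '' T.B w = ∅)

/-- `v` is a deepest common node `dcn(x,y)`: both `x` and `y` lie in the
feasible region of `v`, and `v` is deepest with this property. -/
def IsDCN (𝒞 : Set (Set (Fin n → ℝ))) (v : T.V) (x y : Fin n → ℝ) : Prop :=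
  x ∈ T.region 𝒞 v ∧ y ∈ T.region 𝒞 v ∧
  ∀ w : T.V, x ∈ T.region 𝒞 w → y ∈ T.region 𝒞 w → T.depth w ≤ T.depth v

/-- `x ⪰_T y` : with `v = dcn(x,y)`, `σ v (x) = σ v (y)` or `σ v (x) ≻_ε σ v (y)`. -/
def TreeGe (𝒞 : Set (Set (Fin n → ℝ))) (ε : ℝ) (x y : Fin n → ℝ) : Prop :=
  ∃ v : T.V, T.IsDCN 𝒞 v x y ∧
    (sigApply (T.sig v) x = sigApply (T.sig v) y ∨
      lexGt ε (sigApply (T.sig v) x) (sigApply (T.sig v) y))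

/-- `x ≻_{ε,T} y` : with `v = dcn(x,y)`, `σ v (x) ≻_ε σ v (y)`. -/
def TreeGt (𝒞 : Set (Set (Fin n → ℝ))) (ε : ℝ) (x y : Fin n → ℝ) : Prop :=
  ∃ v : T.V, T.IsDCN 𝒞 v x y ∧
    lexGt ε (sigApply (T.sig v) x) (sigApply (T.sig v) y)

end BranchingTree

/-- A configuration `(𝒞, 𝒟, g, z, T, ε)`. -/
structure Config (n : ℕ) where
  core : Set (Set (Fin n → ℝ))
  derived : Set (Set (Fin n → ℝ))
  g : (Fin n → ℝ) → ℝ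
  z : WithTop ℝ
  tree : BranchingTree n
  eps : ℝ

/-- `(F, f)`-validity of a configuration: (V1) the tree is core-consistent and
`ε > 0`; (V2) if `z < ∞` there is `x ∈ F` with `f x ≤ z`; (V3) for every real
`ẑ < z`, `F` contains a point of `f`-value `≤ ẑ` iff `⋂𝒞` contains a point of
`g`-value `≤ ẑ`; (V4) every `x ∈ ⋂𝒞` with `g x < z` is dominated by some
`y ∈ ⋂(𝒞 ∪ 𝒟)` with `y ⪰_T x` and `g y ≤ g x`. -/
def Config.Valid {n : ℕ} (F : Set (Fin n → ℝ)) (f : (Fin n → ℝ) → ℝ)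
    (K : Config n) : Prop :=
  (K.tree.Consistent K.core ∧ 0 < K.eps) ∧
  (K.z < ⊤ → ∃ x ∈ F, (f x : WithTop ℝ) ≤ K.z) ∧
  (∀ zh : ℝ, (zh : WithTop ℝ) < K.z →
    ((∃ x ∈ F, f x ≤ zh) ↔ ∃ x ∈ ⋂₀ K.core, K.g x ≤ zh)) ∧
  (∀ x ∈ ⋂₀ K.core, (K.g x : WithTop ℝ) < K.z →
    ∃ y ∈ ⋂₀ (K.core ∪ K.derived), K.tree.TreeGe K.core K.eps y x ∧ K.g y ≤ K.g x)

/-- The implication constraint `[𝒜 ⇝ C] = (ℝⁿ \ ⋂𝒜) ∪ C`. -/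
def implCon {n : ℕ} (𝒜 : Set (Set (Fin n → ℝ))) (C : Set (Fin n → ℝ)) :
    Set (Fin n → ℝ) := (⋂₀ 𝒜)ᶜ ∪ C


/-!
Following branching constraints downward from the root, the covering condition (T3) always lets
`x` pass to some child, so a deepest node whose region contains `x` is a leaf. Conversely, by the
disjointness condition (T7) the children of a node have pairwise disjoint constraints, so two nodes
whose regions both contain `x` lie on a common root path; a leaf can only be comparable to another
leaf by being equal to it.
-/

open Relation

namespace BranchingTree

variable {n : ℕ} (T : BranchingTree n)

/-- `T.ParentRel a b`: `b` is the parent of `a`. -/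
abbrev ParentRel (a b : T.V) : Prop := T.parent a = some b

variable {T}

lemma ParentRel.eq {a b c : T.V} (hb : T.ParentRel a b) (hc : T.ParentRel a c) : b = c :=
  Option.some.inj (hb.symm.trans hc)

lemma not_parentRel_root (a : T.V) : ¬ T.ParentRel T.root a := by
  simp [T.parent_root]

lemma transGen_self_of_reflTransGen {a b : T.V} (hab : ReflTransGen T.ParentRel a b)
    (ha : TransGen T.ParentRel a a) : TransGen T.ParentRel b b := by
  induction hab with
  | refl => exact ha
  | tail _ hbc ih =>
    obtain ⟨d, hbd, hdb⟩ := TransGen.head'_iff.mp ih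
    obtain rfl := hbd.eq hbc
    exact TransGen.tail' hdb hbc

-- A cycle would contain the root, which has no parent.
lemma not_transGen_self (a : T.V) : ¬ TransGen T.ParentRel a a := fun ha =>
  have ⟨_, hroot, _⟩ := TransGen.head'_iff.mp (transGen_self_of_reflTransGen (T.reach_root a) ha)
  T.not_parentRel_root _ hroot

lemma root_mem_pathNodes (v : T.V) : T.root ∈ T.pathNodes v := T.reach_root v

lemma pathNodes_root : T.pathNodes T.root = {T.root} := by
  ext w
  refine ⟨fun h => ?_, fun h => h ▸ ReflTransGen.refl⟩
  rcases ReflTransGen.cases_head h with h | ⟨d, hd, -⟩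
  · exact h.symm
  · exact (T.not_parentRel_root d hd).elim

lemma pathNodes_subset {a b : T.V} (h : b ∈ T.pathNodes a) : T.pathNodes b ⊆ T.pathNodes a :=
  fun _ hw => ReflTransGen.trans h hw

lemma pathNodes_of_parentRel {c u : T.V} (hcu : T.ParentRel c u) :
    T.pathNodes c = insert c (T.pathNodes u) := by
  ext w
  refine ⟨fun h => ?_, ?_⟩
  · rcases ReflTransGen.cases_head h with h | ⟨d, hcd, hdw⟩
    · exact Or.inl h.symm
    · exact Or.inr (ParentRel.eq hcd hcu ▸ hdw)
  · rintro (rfl | h)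
    · exact ReflTransGen.refl
    · exact ReflTransGen.head hcu h

lemma notMem_pathNodes_of_parentRel {c u : T.V} (hcu : T.ParentRel c u) :
    c ∉ T.pathNodes u :=
  fun h => T.not_transGen_self c (TransGen.head' hcu h)

lemma depth_of_parentRel {c u : T.V} (hcu : T.ParentRel c u) :
    T.depth c = T.depth u + 1 := by
  have := T.fin
  rw [depth, pathNodes_of_parentRel hcu,
    Set.ncard_insert_of_notMem (notMem_pathNodes_of_parentRel hcu) (Set.toFinite _), depth]

lemma IsLeaf.eq_of_mem_pathNodes {v w : T.V} (hv : T.IsLeaf v) (h : v ∈ T.pathNodes w) :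
    w = v := by
  rcases ReflTransGen.cases_tail h with h | ⟨c, -, hcv⟩
  · exact h.symm
  · exact ((Set.eq_empty_iff_forall_notMem.mp hv) c hcv).elim

section Region

variable {𝒞 : Set (Set (Fin n → ℝ))}

lemma region_root : T.region 𝒞 T.root = ⋂₀ 𝒞 := by
  simp [region, pathCons, pathNodes_root, T.B_root]

lemma region_of_parentRel {c u : T.V} (hcu : T.ParentRel c u) :
    T.region 𝒞 c = T.region 𝒞 u ∩ T.B c := by
  rw [region, region, pathCons, pathCons, pathNodes_of_parentRel hcu, Set.image_insert_eq,
    Set.union_insert, Set.sInter_insert, Set.inter_comm]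

lemma region_anti {a b : T.V} (h : b ∈ T.pathNodes a) : T.region 𝒞 a ⊆ T.region 𝒞 b :=
  Set.sInter_subset_sInter <| Set.union_subset_union_right _ <| Set.image_mono (pathNodes_subset h)

lemma mem_B_of_mem_region {v u : T.V} {x : Fin n → ℝ} (hx : x ∈ T.region 𝒞 v)
    (hu : u ∈ T.pathNodes v) : x ∈ T.B u :=
  hx (T.B u) (Or.inr ⟨u, hu, rfl⟩)

lemma Consistent.pairwiseDisjoint_B (hT : T.Consistent 𝒞) (u : T.V) :
    (T.children u).PairwiseDisjoint T.B := fun _ hv _ hw hvw =>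
  Disjoint.of_image (f := sigApply (T.sig u)) (Set.disjoint_iff_inter_eq_empty.mpr
    (hT.2.2.2 u _ _ hv hw hvw))

lemma exists_isLeaf_mem_region
    (hcover : ∀ u, (T.children u).Nonempty → ⋂₀ 𝒞 ⊆ ⋃ v ∈ T.children u, T.B v)
    {x : Fin n → ℝ} (hx : x ∈ ⋂₀ 𝒞) : ∃ v, T.IsLeaf v ∧ x ∈ T.region 𝒞 v := by
  have := T.fin
  obtain ⟨u, hxu, hmax⟩ := Set.exists_max_image {u | x ∈ T.region 𝒞 u} T.depth
    (Set.toFinite _) ⟨T.root, show x ∈ T.region 𝒞 T.root by rwa [region_root]⟩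
  refine ⟨u, Set.not_nonempty_iff_eq_empty.mp fun hne => ?_, hxu⟩
  obtain ⟨c, hc, hxc⟩ := Set.mem_iUnion₂.mp (hcover u hne hx)
  have hdepth := hmax c (show x ∈ T.region 𝒞 c by rw [region_of_parentRel hc]; exact ⟨hxu, hxc⟩)
  rw [depth_of_parentRel hc] at hdepth
  omega

-- Induction along the root path of `v`: if `v`'s parent `p` is an ancestor of `w`, then the
-- child of `p` on the path of `w` is `v` itself, by disjointness.
lemma mem_pathNodes_or_mem_pathNodes (hdisj : ∀ u, (T.children u).PairwiseDisjoint T.B)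
    {x : Fin n → ℝ} {v w : T.V} (hv : x ∈ T.region 𝒞 v) (hw : x ∈ T.region 𝒞 w) :
    v ∈ T.pathNodes w ∨ w ∈ T.pathNodes v := by
  induction T.reach_root v using ReflTransGen.head_induction_on with
  | refl => exact Or.inl (root_mem_pathNodes w)
  | @head v p hvp _ ih =>
    rcases ih (region_anti (ReflTransGen.single hvp) hv) with hpw | hwp
    · rcases ReflTransGen.cases_tail hpw with rfl | ⟨c, hwc, hcp⟩
      · exact Or.inr (ReflTransGen.single hvp)
      · obtain rfl : c = v := (hdisj p).elim_set hcp hvp x (mem_B_of_mem_region hw hwc)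
          (mem_B_of_mem_region hv ReflTransGen.refl)
        exact Or.inl hwc
    · exact Or.inr (ReflTransGen.head hvp hwp)

end Region

end BranchingTree

/-- unique leaf: if `T` is a `𝒞`-consistent branching tree,
then every `x ∈ ⋂𝒞` lies in the feasible region `⋂(𝒞 ∪ ℬ_v)` of exactly one
leaf `v` of `T`. -/
theorem unique_leaf {n : ℕ} (𝒞 : Set (Set (Fin n → ℝ))) (T : BranchingTree n)
    (hT : T.Consistent 𝒞) (x : Fin n → ℝ) (hx : x ∈ ⋂₀ 𝒞) :
    ∃! v : T.V, T.IsLeaf v ∧ x ∈ T.region 𝒞 v := by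
  obtain ⟨v, hv, hxv⟩ := T.exists_isLeaf_mem_region hT.1 hx
  refine ⟨v, ⟨hv, hxv⟩, fun w ⟨hw, hxw⟩ => ?_⟩
  rcases T.mem_pathNodes_or_mem_pathNodes hT.pairwiseDisjoint_B hxw hxv with h | h
  · exact (hw.eq_of_mem_pathNodes h).symm
  · exact hv.eq_of_mem_pathNodes h
end

section
/- Let T be a 𝒞-consistent branching tree and ε > 0. Then the relation ⪰_T is a preorder on ⋂𝒞 (i.e. reflexive and transitive), and the relation ≻_{ε,T} is a strict order on ⋂𝒞 (i.e. irreflexive, antisymmetric, and transitive). -/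
open Set

/-!
By (T7), the nodes whose regions contain a given point of `⋂𝒞` form a chain, so the deepest
common node of two points is unique and lies below every common node. By (T5), the signature of
a node extends those of its ancestors, so a comparison at a node restricts to its ancestors and a
strict comparison extends to its descendants. Transitivity is checked at the higher of the two
deepest common nodes: a strict comparison there extends down to the new deepest common node,
while equal signatures at a deepest common node force it to be a leaf (by (T3) and (T7) the
two points would otherwise share a child), so that it remains the deepest common node.
-/

section LexOrder

variable {ε : ℝ}

def lexGe (ε : ℝ) (a b : List ℝ) : Prop := a = b ∨ lexGt ε a b

theorem lexGt_irrefl (ε : ℝ) : ∀ a : List ℝ, ¬ lexGt ε a a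
  | [] => id
  | _ :: as => fun h => h.elim (fun h => lexGt_irrefl ε as h.2) (fun h => h.1 rfl)

theorem lexGt_asymm (hε : 0 ≤ ε) : ∀ {a b : List ℝ}, lexGt ε a b → ¬ lexGt ε b a
  | _ :: _, _ :: _, Or.inl ⟨rfl, h⟩, Or.inl ⟨_, h'⟩ => lexGt_asymm hε h h'
  | _ :: _, _ :: _, Or.inl ⟨rfl, _⟩, Or.inr ⟨hne, _⟩ => hne rfl
  | _ :: _, _ :: _, Or.inr ⟨hne, _⟩, Or.inl ⟨heq, _⟩ => hne heq.symm
  | _ :: _, _ :: _, Or.inr ⟨hne, h⟩, Or.inr ⟨_, h'⟩ => hne (by linarith)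

theorem lexGt_trans (hε : 0 ≤ ε) :
    ∀ {a b c : List ℝ}, lexGt ε a b → lexGt ε b c → lexGt ε a c
  | _ :: _, _ :: _, _ :: _, Or.inl ⟨rfl, h⟩, Or.inl ⟨rfl, h'⟩ => Or.inl ⟨rfl, lexGt_trans hε h h'⟩
  | _ :: _, _ :: _, _ :: _, Or.inl ⟨rfl, _⟩, Or.inr h' => Or.inr h'
  | _ :: _, _ :: _, _ :: _, Or.inr h, Or.inl ⟨rfl, _⟩ => Or.inr h
  | _ :: _, _ :: _, _ :: _, Or.inr ⟨hne, h⟩, Or.inr ⟨_, h'⟩ =>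
    Or.inr ⟨fun hac => hne (le_antisymm (by linarith) (by linarith)), by linarith⟩

theorem lexGt.append : ∀ {a b : List ℝ}, lexGt ε a b → ∀ a' b', lexGt ε (a ++ a') (b ++ b')
  | _ :: _, _ :: _, Or.inl ⟨rfl, h⟩, a', b' => Or.inl ⟨rfl, h.append a' b'⟩
  | _ :: _, _ :: _, Or.inr h, _, _ => Or.inr h

theorem lexGe_of_lexGt_append {a' b' : List ℝ} :
    ∀ {a b : List ℝ}, a.length = b.length → lexGt ε (a ++ a') (b ++ b') → lexGe ε a b
  | [], [], _, _ => Or.inl rfl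
  | _ :: _, _ :: _, hlen, Or.inl ⟨rfl, h⟩ =>
    (lexGe_of_lexGt_append (Nat.succ_injective hlen) h).elim
      (fun h => Or.inl (h ▸ rfl)) (fun h => Or.inr (Or.inl ⟨rfl, h⟩))
  | _ :: _, _ :: _, _, Or.inr h => Or.inr (Or.inr h)

theorem lexGe_of_append {a b a' b' : List ℝ} (hlen : a.length = b.length)
    (h : lexGe ε (a ++ a') (b ++ b')) : lexGe ε a b :=
  h.elim (fun h => Or.inl (List.append_inj_left h hlen)) (lexGe_of_lexGt_append hlen)

theorem lexGe_trans (hε : 0 ≤ ε) {a b c : List ℝ} :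
    lexGe ε a b → lexGe ε b c → lexGe ε a c
  | Or.inl rfl, h => h
  | Or.inr h, Or.inl rfl => Or.inr h
  | Or.inr h, Or.inr h' => Or.inr (lexGt_trans hε h h')

theorem lexGt_of_lexGt_of_lexGe (hε : 0 ≤ ε) {a b c : List ℝ} :
    lexGt ε a b → lexGe ε b c → lexGt ε a c
  | h, Or.inl rfl => h
  | h, Or.inr h' => lexGt_trans hε h h'

theorem lexGt_of_lexGe_of_lexGt (hε : 0 ≤ ε) {a b c : List ℝ} :
    lexGe ε a b → lexGt ε b c → lexGt ε a c
  | Or.inl rfl, h => h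
  | Or.inr h, h' => lexGt_trans hε h h'

theorem lexGe_antisymm (hε : 0 ≤ ε) {a b : List ℝ} : lexGe ε a b → lexGe ε b a → a = b
  | Or.inl h, _ => h
  | Or.inr _, Or.inl h => h.symm
  | Or.inr h, Or.inr h' => (lexGt_asymm hε h h').elim

end LexOrder

theorem sigApply_append {n : ℕ} (σ τ : List (Fin n × Bool)) (x : Fin n → ℝ) :
    sigApply (σ ++ τ) x = sigApply σ x ++ sigApply τ x :=
  List.map_append ..

theorem length_sigApply {n : ℕ} (σ : List (Fin n × Bool)) (x : Fin n → ℝ) :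
    (sigApply σ x).length = σ.length :=
  List.length_map ..

namespace BranchingTree

variable {n : ℕ} {T : BranchingTree n} {𝒞 : Set (Set (Fin n → ℝ))}

def Below (T : BranchingTree n) (v u : T.V) : Prop :=
  Relation.ReflTransGen (fun a b => T.parent a = some b) v u

theorem eq_root_of_root_below {u : T.V} (h : T.Below T.root u) : u = T.root := by
  rcases h.cases_head with h | ⟨_, hc, _⟩
  · exact h.symm
  · simp [T.parent_root] at hc

theorem not_below_of_parent_eq {c u : T.V} (h : T.parent c = some u) : ¬ T.Below u c := by
  induction T.reach_root u using Relation.ReflTransGen.head_induction_on generalizing c with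
  | refl =>
    intro hc
    rw [eq_root_of_root_below hc, T.parent_root] at h
    cases h
  | @head u p hup _ ih =>
    intro huc
    rcases huc.cases_head with rfl | ⟨d, hud, hdc⟩
    · rw [hup] at h
      cases h
      exact ih hup .refl
    · rw [hup] at hud
      cases hud
      exact ih hup (hdc.tail h)

theorem depth_le_of_below {v u : T.V} (h : T.Below v u) : T.depth u ≤ T.depth v :=
  have := T.fin
  Set.ncard_le_ncard (fun _ hw => h.trans hw) (Set.toFinite _)

theorem depth_lt_of_parent_eq {c u : T.V} (h : T.parent c = some u) :
    T.depth u < T.depth c :=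
  have := T.fin
  Set.ncard_lt_ncard
    (Set.ssubset_iff_subset_ne.2 ⟨fun _ hw => Relation.ReflTransGen.head h hw,
      fun he => not_below_of_parent_eq h ((Set.ext_iff.1 he c).2 .refl)⟩)
    (Set.toFinite _)

theorem depth_lt_of_below {v u : T.V} (h : T.Below v u) (hne : v ≠ u) :
    T.depth u < T.depth v := by
  rcases h.cases_tail with rfl | ⟨c, hvc, hcu⟩
  · exact absurd rfl hne
  · exact (depth_lt_of_parent_eq hcu).trans_le (depth_le_of_below hvc)

theorem eq_of_below_of_depth_le {v u : T.V} (h : T.Below v u) (hd : T.depth v ≤ T.depth u) :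
    v = u :=
  by_contra fun hne => (depth_lt_of_below h hne).not_ge hd

theorem eq_of_below_of_isLeaf {v u : T.V} (hu : T.IsLeaf u) (h : T.Below v u) : v = u := by
  rcases h.cases_tail with rfl | ⟨c, _, hcu⟩
  · rfl
  · exact absurd (hu ▸ hcu : c ∈ (∅ : Set T.V)) id

theorem region_anti_s2 {v u : T.V} (h : T.Below v u) : T.region 𝒞 v ⊆ T.region 𝒞 u :=
  Set.sInter_subset_sInter
    (Set.union_subset_union_right _ (Set.image_mono fun _ hw => h.trans hw))

theorem region_subset_sInter (v : T.V) : T.region 𝒞 v ⊆ ⋂₀ 𝒞 :=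
  Set.sInter_subset_sInter Set.subset_union_left

theorem region_subset_B (v : T.V) : T.region 𝒞 v ⊆ T.B v :=
  fun _ hx => hx (T.B v) (Or.inr ⟨v, .refl, rfl⟩)

theorem mem_region_root {x : Fin n → ℝ} (hx : x ∈ ⋂₀ 𝒞) : x ∈ T.region 𝒞 T.root := by
  rintro S (hS | ⟨u, hu, rfl⟩)
  · exact hx S hS
  · rw [eq_root_of_root_below hu, T.B_root]
    trivial

theorem mem_region_of_parent_eq {c u : T.V} (hc : T.parent c = some u) {x : Fin n → ℝ}
    (hxu : x ∈ T.region 𝒞 u) (hxc : x ∈ T.B c) : x ∈ T.region 𝒞 c := by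
  rintro S (hS | ⟨w, hw, rfl⟩)
  · exact hxu S (Or.inl hS)
  · rcases hw.cases_head with rfl | ⟨d, hcd, hdw⟩
    · exact hxc
    · rw [hc] at hcd
      cases hcd
      exact hxu _ (Or.inr ⟨w, hdw, rfl⟩)

theorem child_eq_of_sigApply_eq (hT : T.Consistent 𝒞) {u v w : T.V}
    (hv : v ∈ T.children u) (hw : w ∈ T.children u) {x y : Fin n → ℝ}
    (hx : x ∈ T.B v) (hy : y ∈ T.B w) (heq : sigApply (T.sig u) x = sigApply (T.sig u) y) :
    v = w :=
  by_contra fun hne => (hT.2.2.2 u v w hv hw hne).subset ⟨⟨x, hx, heq⟩, ⟨y, hy, rfl⟩⟩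

theorem mem_B_of_sigApply_eq (hT : T.Consistent 𝒞) {u c : T.V} (hc : c ∈ T.children u)
    {x y : Fin n → ℝ} (hx : x ∈ ⋂₀ 𝒞) (hy : y ∈ T.B c)
    (heq : sigApply (T.sig u) x = sigApply (T.sig u) y) : x ∈ T.B c := by
  obtain ⟨c', hc', hxc'⟩ := Set.mem_iUnion₂.1 (hT.1 u ⟨c, hc⟩ hx)
  rwa [child_eq_of_sigApply_eq hT hc' hc hxc' hy heq] at hxc'

theorem below_or_below_of_mem_region (hT : T.Consistent 𝒞) {x : Fin n → ℝ} {v w : T.V}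
    (hv : x ∈ T.region 𝒞 v) (hw : x ∈ T.region 𝒞 w) : T.Below v w ∨ T.Below w v := by
  induction T.reach_root v using Relation.ReflTransGen.head_induction_on with
  | refl => exact Or.inr (T.reach_root w)
  | @head v p hvp _ ih =>
    rcases ih (region_anti_s2 (.single hvp) hv) with hpw | hwp
    · exact Or.inl (.head hvp hpw)
    rcases hwp.cases_tail with rfl | ⟨c, hwc, hcp⟩
    · exact Or.inl (.single hvp)
    · have hcv : c = v := child_eq_of_sigApply_eq hT hcp hvp
        (region_subset_B c (region_anti_s2 hwc hw)) (region_subset_B v hv) rfl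
      exact Or.inr (hcv ▸ hwc)

theorem exists_isDCN {x y : Fin n → ℝ} (hx : x ∈ ⋂₀ 𝒞) (hy : y ∈ ⋂₀ 𝒞) :
    ∃ v, T.IsDCN 𝒞 v x y := by
  have := T.fin
  obtain ⟨v, ⟨hxv, hyv⟩, hmax⟩ := Set.Finite.exists_maximalFor T.depth
    {v | x ∈ T.region 𝒞 v ∧ y ∈ T.region 𝒞 v} (Set.toFinite _)
    ⟨T.root, mem_region_root hx, mem_region_root hy⟩
  exact ⟨v, hxv, hyv, fun w hxw hyw => le_of_not_gt fun hlt => hlt.not_ge (hmax ⟨hxw, hyw⟩ hlt.le)⟩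

theorem IsDCN.symm {v : T.V} {x y : Fin n → ℝ} (h : T.IsDCN 𝒞 v x y) : T.IsDCN 𝒞 v y x :=
  ⟨h.2.1, h.1, fun w hyw hxw => h.2.2 w hxw hyw⟩

theorem IsDCN.below (hT : T.Consistent 𝒞) {u v : T.V} {x y : Fin n → ℝ}
    (hv : T.IsDCN 𝒞 v x y) (hxu : x ∈ T.region 𝒞 u) (hyu : y ∈ T.region 𝒞 u) :
    T.Below v u := by
  rcases below_or_below_of_mem_region hT hxu hv.1 with huv | hvu
  · rw [eq_of_below_of_depth_le huv (hv.2.2 u hxu hyu)]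
    exact .refl
  · exact hvu

theorem IsDCN.unique (hT : T.Consistent 𝒞) {v w : T.V} {x y : Fin n → ℝ}
    (hv : T.IsDCN 𝒞 v x y) (hw : T.IsDCN 𝒞 w x y) : v = w :=
  eq_of_below_of_depth_le (hv.below hT hw.1 hw.2.1) (hw.2.2 v hv.1 hv.2.1)

theorem isDCN_of_isLeaf (hT : T.Consistent 𝒞) {u : T.V} (hu : T.IsLeaf u) {x y : Fin n → ℝ}
    (hx : x ∈ T.region 𝒞 u) (hy : y ∈ T.region 𝒞 u) : T.IsDCN 𝒞 u x y := by
  refine ⟨hx, hy, fun w hxw _ => ?_⟩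
  rcases below_or_below_of_mem_region hT hx hxw with huw | hwu
  · exact depth_le_of_below huw
  · rw [eq_of_below_of_isLeaf hu hwu]

theorem IsDCN.isLeaf_of_sigApply_eq (hT : T.Consistent 𝒞) {u : T.V} {x y : Fin n → ℝ}
    (h : T.IsDCN 𝒞 u x y) (heq : sigApply (T.sig u) x = sigApply (T.sig u) y) :
    T.IsLeaf u := by
  refine Set.not_nonempty_iff_eq_empty.1 fun hne => ?_
  obtain ⟨c, hc, hxc⟩ := Set.mem_iUnion₂.1 (hT.1 u hne (region_subset_sInter u h.1))
  have hyc : y ∈ T.B c := mem_B_of_sigApply_eq hT hc (region_subset_sInter u h.2.1) hxc heq.symm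
  exact (depth_lt_of_parent_eq hc).not_ge
    (h.2.2 c (mem_region_of_parent_eq hc h.1 hxc) (mem_region_of_parent_eq hc h.2.1 hyc))

theorem sig_prefix (hT : T.Consistent 𝒞) {v u : T.V} (h : T.Below v u) :
    T.sig u <+: T.sig v := by
  induction h with
  | refl => exact List.prefix_refl _
  | tail _ hcu ih => exact (hT.2.1 _ _ hcu).trans ih

variable {ε : ℝ}

theorem lexGe_sigApply_of_below (hT : T.Consistent 𝒞) {v u : T.V} (h : T.Below v u)
    {x y : Fin n → ℝ} (hxy : lexGe ε (sigApply (T.sig v) x) (sigApply (T.sig v) y)) :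
    lexGe ε (sigApply (T.sig u) x) (sigApply (T.sig u) y) := by
  obtain ⟨τ, hτ⟩ := sig_prefix hT h
  rw [← hτ, sigApply_append, sigApply_append] at hxy
  exact lexGe_of_append (by rw [length_sigApply, length_sigApply]) hxy

theorem lexGt_sigApply_of_below (hT : T.Consistent 𝒞) {v u : T.V} (h : T.Below v u)
    {x y : Fin n → ℝ} (hxy : lexGt ε (sigApply (T.sig u) x) (sigApply (T.sig u) y)) :
    lexGt ε (sigApply (T.sig v) x) (sigApply (T.sig v) y) := by
  obtain ⟨τ, hτ⟩ := sig_prefix hT h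
  rw [← hτ, sigApply_append, sigApply_append]
  exact hxy.append _ _

theorem treeGt_of_lexGt (hT : T.Consistent 𝒞) {u : T.V} {x y : Fin n → ℝ}
    (hx : x ∈ T.region 𝒞 u) (hy : y ∈ T.region 𝒞 u)
    (hxy : lexGt ε (sigApply (T.sig u) x) (sigApply (T.sig u) y)) : T.TreeGt 𝒞 ε x y := by
  obtain ⟨v, hv⟩ := exists_isDCN (T := T) (region_subset_sInter u hx) (region_subset_sInter u hy)
  exact ⟨v, hv, lexGt_sigApply_of_below hT (hv.below hT hx hy) hxy⟩

theorem TreeGt.treeGe {x y : Fin n → ℝ} (h : T.TreeGt 𝒞 ε x y) : T.TreeGe 𝒞 ε x y :=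
  let ⟨v, hv, hxy⟩ := h
  ⟨v, hv, Or.inr hxy⟩

theorem treeGe_of_lexGe (hT : T.Consistent 𝒞) {u : T.V} {x y : Fin n → ℝ}
    (hx : x ∈ T.region 𝒞 u) (hy : y ∈ T.region 𝒞 u)
    (hxy : lexGe ε (sigApply (T.sig u) x) (sigApply (T.sig u) y))
    (hleaf : sigApply (T.sig u) x = sigApply (T.sig u) y → T.IsLeaf u) : T.TreeGe 𝒞 ε x y := by
  rcases hxy with heq | hgt
  · exact ⟨u, isDCN_of_isLeaf hT (hleaf heq) hx hy, Or.inl heq⟩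
  · exact (treeGt_of_lexGt hT hx hy hgt).treeGe

theorem treeGe_refl {x : Fin n → ℝ} (hx : x ∈ ⋂₀ 𝒞) : T.TreeGe 𝒞 ε x x :=
  let ⟨v, hv⟩ := exists_isDCN (T := T) hx hx
  ⟨v, hv, Or.inl rfl⟩

theorem treeGe_trans (hT : T.Consistent 𝒞) (hε : 0 ≤ ε) {x y z : Fin n → ℝ}
    (hyx : T.TreeGe 𝒞 ε y x) (hzy : T.TreeGe 𝒞 ε z y) : T.TreeGe 𝒞 ε z x := by
  obtain ⟨u, hu, h₁⟩ := hyx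
  obtain ⟨v, hv, h₂⟩ := hzy
  rcases below_or_below_of_mem_region hT hu.1 hv.2.1 with huv | hvu
  · have h₁' := lexGe_sigApply_of_below hT huv h₁
    exact treeGe_of_lexGe hT hv.1 (region_anti_s2 huv hu.2.1) (lexGe_trans hε h₂ h₁') fun hzx =>
      hv.isLeaf_of_sigApply_eq hT (lexGe_antisymm hε h₂ (hzx ▸ h₁'))
  · have h₂' := lexGe_sigApply_of_below hT hvu h₂
    exact treeGe_of_lexGe hT (region_anti_s2 hvu hv.1) hu.2.1 (lexGe_trans hε h₂' h₁) fun hzx =>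
      hu.isLeaf_of_sigApply_eq hT (lexGe_antisymm hε h₁ (hzx ▸ h₂'))

theorem treeGt_irrefl (x : Fin n → ℝ) : ¬ T.TreeGt 𝒞 ε x x :=
  fun ⟨_, _, h⟩ => lexGt_irrefl ε _ h

theorem treeGt_asymm (hT : T.Consistent 𝒞) (hε : 0 ≤ ε) {x y : Fin n → ℝ}
    (hxy : T.TreeGt 𝒞 ε x y) : ¬ T.TreeGt 𝒞 ε y x := by
  rintro ⟨v, hv, hyx⟩
  obtain ⟨u, hu, hxy⟩ := hxy
  obtain rfl := hu.unique hT hv.symm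
  exact lexGt_asymm hε hxy hyx

theorem treeGt_trans (hT : T.Consistent 𝒞) (hε : 0 ≤ ε) {x y z : Fin n → ℝ}
    (hyx : T.TreeGt 𝒞 ε y x) (hzy : T.TreeGt 𝒞 ε z y) : T.TreeGt 𝒞 ε z x := by
  obtain ⟨u, hu, h₁⟩ := hyx
  obtain ⟨v, hv, h₂⟩ := hzy
  rcases below_or_below_of_mem_region hT hu.1 hv.2.1 with huv | hvu
  · exact treeGt_of_lexGt hT hv.1 (region_anti_s2 huv hu.2.1)
      (lexGt_of_lexGt_of_lexGe hε h₂ (lexGe_sigApply_of_below hT huv (Or.inr h₁)))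
  · exact treeGt_of_lexGt hT (region_anti_s2 hvu hv.1) hu.2.1
      (lexGt_of_lexGe_of_lexGt hε (lexGe_sigApply_of_below hT hvu (Or.inr h₂)) h₁)

end BranchingTree

/-- for a `𝒞`-consistent branching tree `T` and `ε > 0`, the
relation `⪰_T` is a preorder (reflexive and transitive) on `⋂𝒞`, and `≻_{ε,T}`
is a strict order (irreflexive, antisymmetric, transitive) on `⋂𝒞`. -/
theorem treeGe_preorder_treeGt_strictOrder {n : ℕ} (𝒞 : Set (Set (Fin n → ℝ)))
    (T : BranchingTree n) (ε : ℝ) (hT : T.Consistent 𝒞) (hε : 0 < ε) :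
    (∀ x ∈ ⋂₀ 𝒞, T.TreeGe 𝒞 ε x x) ∧
    (∀ x ∈ ⋂₀ 𝒞, ∀ y ∈ ⋂₀ 𝒞, ∀ z ∈ ⋂₀ 𝒞,
      T.TreeGe 𝒞 ε y x → T.TreeGe 𝒞 ε z y → T.TreeGe 𝒞 ε z x) ∧
    (∀ x ∈ ⋂₀ 𝒞, ¬ T.TreeGt 𝒞 ε x x) ∧
    (∀ x ∈ ⋂₀ 𝒞, ∀ y ∈ ⋂₀ 𝒞, T.TreeGt 𝒞 ε x y → ¬ T.TreeGt 𝒞 ε y x) ∧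
    (∀ x ∈ ⋂₀ 𝒞, ∀ y ∈ ⋂₀ 𝒞, ∀ z ∈ ⋂₀ 𝒞,
      T.TreeGt 𝒞 ε y x → T.TreeGt 𝒞 ε z y → T.TreeGt 𝒞 ε z x) :=
  ⟨fun _ hx => BranchingTree.treeGe_refl hx,
    fun _ _ _ _ _ _ hyx hzy => BranchingTree.treeGe_trans hT hε.le hyx hzy,
    fun x _ => BranchingTree.treeGt_irrefl x,
    fun _ _ _ _ hxy => BranchingTree.treeGt_asymm hT hε.le hxy,
    fun _ _ _ _ _ _ hyx hzy => BranchingTree.treeGt_trans hT hε.le hyx hzy⟩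
end

section
/- Let (𝒞, 𝒟, g, z, T, ε) be an (F, f)-valid configuration with ∅ ∈ 𝒟. Then there exists no solution x ∈ F with f(x) < z. -/
open Set

namespace Config.Valid

variable {n : ℕ} {F : Set (Fin n → ℝ)} {f : (Fin n → ℝ) → ℝ} {K : Config n}

theorem exists_core_lt (hV : K.Valid F f) {x : Fin n → ℝ} (hxF : x ∈ F)
    (hfx : (f x : WithTop ℝ) < K.z) : ∃ y ∈ ⋂₀ K.core, (K.g y : WithTop ℝ) < K.z := by
  obtain ⟨-, -, hV3, -⟩ := hV
  obtain ⟨y, hy, hgy⟩ := (hV3 (f x) hfx).mp ⟨x, hxF, le_rfl⟩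
  exact ⟨y, hy, lt_of_le_of_lt (WithTop.coe_le_coe.mpr hgy) hfx⟩

theorem sInter_core_union_derived_nonempty (hV : K.Valid F f) {x : Fin n → ℝ}
    (hx : x ∈ ⋂₀ K.core) (hgx : (K.g x : WithTop ℝ) < K.z) :
    (⋂₀ (K.core ∪ K.derived)).Nonempty := by
  obtain ⟨-, -, -, hV4⟩ := hV
  obtain ⟨y, hy, -⟩ := hV4 x hx hgx
  exact ⟨y, hy⟩

end Config.Valid

/-- goal configuration: if `(𝒞, 𝒟, g, z, T, ε)` is an
`(F, f)`-valid configuration with `∅ ∈ 𝒟`, then there is no `x ∈ F` with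
`f x < z`. -/
theorem goal_config {n : ℕ} (F : Set (Fin n → ℝ)) (f : (Fin n → ℝ) → ℝ)
    (K : Config n) (hV : K.Valid F f) (h : (∅ : Set (Fin n → ℝ)) ∈ K.derived) :
    ¬ ∃ x ∈ F, (f x : WithTop ℝ) < K.z := by
  rintro ⟨x, hxF, hfx⟩
  obtain ⟨y, hy, hgy⟩ := hV.exists_core_lt hxF hfx
  obtain ⟨w, hw⟩ := hV.sInter_core_union_derived_nonempty hy hgy
  exact hw ∅ (Set.mem_union_right _ h)
end

section
/- (Implicational derivation rule.) Let (𝒞, 𝒟, g, z, T, ε) be an (F, f)-valid configuration, let C ⊆ ℝ^n, and let 𝒜 be a set of constraints. If C ⊇ ⋂(𝒞 ∪ 𝒟 ∪ 𝒜) ∩ {x ∈ ℝ^n : g(x) < z}, then (𝒞, 𝒟 ∪ {[𝒜 ⇝ C]}, g, z, T, ε) is also (F, f)-valid. -/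
open Set

theorem mem_implCon_iff {n : ℕ} {𝒜 : Set (Set (Fin n → ℝ))} {C : Set (Fin n → ℝ)}
    {x : Fin n → ℝ} : x ∈ implCon 𝒜 C ↔ (x ∈ ⋂₀ 𝒜 → x ∈ C) := by
  rw [implCon, mem_union, mem_compl_iff, imp_iff_not_or]

/-- The witnesses `y` of (V4) satisfy `g y ≤ g x < z`, so only such points of `⋂(𝒞 ∪ 𝒟)`
need to satisfy a newly derived constraint. -/
theorem Config.Valid.insert_derived {n : ℕ} {F : Set (Fin n → ℝ)} {f : (Fin n → ℝ) → ℝ}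
    {K : Config n} (hV : K.Valid F f) {S : Set (Fin n → ℝ)}
    (hS : ∀ y ∈ ⋂₀ (K.core ∪ K.derived), (K.g y : WithTop ℝ) < K.z → y ∈ S) :
    Config.Valid F f { K with derived := insert S K.derived } := by
  obtain ⟨hcons, hz, hlevel, hdom⟩ := hV
  refine ⟨hcons, hz, hlevel, fun x hx hgx => ?_⟩
  obtain ⟨y, hy, hyx, hgyx⟩ := hdom x hx hgx
  have hgy : (K.g y : WithTop ℝ) < K.z := (WithTop.coe_le_coe.2 hgyx).trans_lt hgx
  refine ⟨y, ?_, hyx, hgyx⟩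
  rw [union_insert, sInter_insert]
  exact ⟨hS y hy hgy, hy⟩

/-- implicational derivation rule: if `(𝒞, 𝒟, g, z, T, ε)` is
`(F, f)`-valid and `C ⊇ ⋂(𝒞 ∪ 𝒟 ∪ 𝒜) ∩ {x : g x < z}`, then
`(𝒞, 𝒟 ∪ {[𝒜 ⇝ C]}, g, z, T, ε)` is also `(F, f)`-valid. -/
theorem implicational_derivation {n : ℕ} (F : Set (Fin n → ℝ))
    (f : (Fin n → ℝ) → ℝ) (K : Config n) (hV : K.Valid F f)
    (C : Set (Fin n → ℝ)) (𝒜 : Set (Set (Fin n → ℝ)))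
    (h : ⋂₀ (K.core ∪ K.derived ∪ 𝒜) ∩ {x | (K.g x : WithTop ℝ) < K.z} ⊆ C) :
    Config.Valid F f
      { core := K.core, derived := insert (implCon 𝒜 C) K.derived,
        g := K.g, z := K.z, tree := K.tree, eps := K.eps } :=
  hV.insert_derived fun y hy hgy => mem_implCon_iff.2 fun hA =>
    h ⟨by rw [sInter_union]; exact ⟨hy, hA⟩, hgy⟩
end

section
/- (Resolution rule.) Let (𝒞, 𝒟, g, z, T, ε) be an (F, f)-valid configuration. Let A_1, A_2, C_1, C_2 ⊆ ℝ^n and let 𝒜_1, 𝒜_2 be sets of constraints such that [(𝒜_1 ∪ {A_1}) ⇝ C_1] ∈ 𝒞 ∪ 𝒟, [(𝒜_2 ∪ {A_2}) ⇝ C_2] ∈ 𝒞 ∪ 𝒟, and A_1 ∪ A_2 ⊇ ⋂(𝒞 ∪ 𝒟). Then (𝒞, 𝒟 ∪ {[(𝒜_1 ∪ 𝒜_2) ⇝ (C_1 ∪ C_2)]}, g, z, T, ε) is also (F, f)-valid. -/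
/-! Only (V4) mentions the derived constraints, and it only needs the dominating point `y` to
lie in `⋂(𝒞 ∪ 𝒟)`. The resolvent contains that set (propositional resolution on `A₁ ∨ A₂`),
so adding it to `𝒟` does not shrink `⋂(𝒞 ∪ 𝒟)`. -/

open Set

theorem implCon_resolve {n : ℕ} {A₁ A₂ C₁ C₂ : Set (Fin n → ℝ)}
    {𝒜₁ 𝒜₂ : Set (Set (Fin n → ℝ))} {y : Fin n → ℝ}
    (hy₁ : y ∈ implCon (insert A₁ 𝒜₁) C₁) (hy₂ : y ∈ implCon (insert A₂ 𝒜₂) C₂)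
    (hA : y ∈ A₁ ∪ A₂) : y ∈ implCon (𝒜₁ ∪ 𝒜₂) (C₁ ∪ C₂) := by
  simp only [implCon, mem_union, mem_compl_iff, sInter_insert, sInter_union, mem_inter_iff]
    at hy₁ hy₂ hA ⊢
  tauto

theorem sInter_union_insert_eq {α : Type*} (𝒞 𝒟 : Set (Set α)) (S : Set α) :
    ⋂₀ (𝒞 ∪ insert S 𝒟) = S ∩ ⋂₀ (𝒞 ∪ 𝒟) := by
  rw [union_insert, sInter_insert]

theorem Config.Valid.of_sInter_subset {n : ℕ} {F : Set (Fin n → ℝ)} {f : (Fin n → ℝ) → ℝ}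
    {K : Config n} (hV : K.Valid F f) {𝒟 : Set (Set (Fin n → ℝ))}
    (h𝒟 : ⋂₀ (K.core ∪ K.derived) ⊆ ⋂₀ (K.core ∪ 𝒟)) :
    Config.Valid F f { K with derived := 𝒟 } := by
  obtain ⟨hcons, hfeas, hopt, hdom⟩ := hV
  refine ⟨hcons, hfeas, hopt, fun x hx hgx => ?_⟩
  obtain ⟨y, hy, hge, hle⟩ := hdom x hx hgx
  exact ⟨y, h𝒟 hy, hge, hle⟩

/-- resolution rule: if `(𝒞, 𝒟, g, z, T, ε)` is `(F, f)`-valid,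
`[(𝒜₁ ∪ {A₁}) ⇝ C₁] ∈ 𝒞 ∪ 𝒟`, `[(𝒜₂ ∪ {A₂}) ⇝ C₂] ∈ 𝒞 ∪ 𝒟`, and
`A₁ ∪ A₂ ⊇ ⋂(𝒞 ∪ 𝒟)`, then `(𝒞, 𝒟 ∪ {[(𝒜₁ ∪ 𝒜₂) ⇝ (C₁ ∪ C₂)]}, g, z, T, ε)`
is also `(F, f)`-valid. -/
theorem resolution {n : ℕ} (F : Set (Fin n → ℝ)) (f : (Fin n → ℝ) → ℝ)
    (K : Config n) (hV : K.Valid F f)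
    (A₁ A₂ C₁ C₂ : Set (Fin n → ℝ)) (𝒜₁ 𝒜₂ : Set (Set (Fin n → ℝ)))
    (h1 : implCon (insert A₁ 𝒜₁) C₁ ∈ K.core ∪ K.derived)
    (h2 : implCon (insert A₂ 𝒜₂) C₂ ∈ K.core ∪ K.derived)
    (h3 : ⋂₀ (K.core ∪ K.derived) ⊆ A₁ ∪ A₂) :
    Config.Valid F f
      { core := K.core, derived := insert (implCon (𝒜₁ ∪ 𝒜₂) (C₁ ∪ C₂)) K.derived,
        g := K.g, z := K.z, tree := K.tree, eps := K.eps } := by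
  refine hV.of_sInter_subset fun y hy => ?_
  rw [sInter_union_insert_eq]
  exact ⟨implCon_resolve (hy _ h1) (hy _ h2) (h3 hy), hy⟩
end

section
/- (Objective bound update rule.) Let (𝒞, 𝒟, g, z, T, ε) be an (F, f)-valid configuration and let x ∈ ⋂𝒞 with g(x) = z' < z. Then (𝒞, 𝒟, g, z', T, ε) is also (F, f)-valid. -/
open Set

namespace Config

variable {n : ℕ} {F : Set (Fin n → ℝ)} {f : (Fin n → ℝ) → ℝ} {K : Config n}

theorem Valid.of_z_le (hV : K.Valid F f) {z' : WithTop ℝ} (hz : z' ≤ K.z)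
    (hF : z' < ⊤ → ∃ y ∈ F, (f y : WithTop ℝ) ≤ z') :
    Config.Valid F f { K with z := z' } := by
  obtain ⟨hV1, -, hV3, hV4⟩ := hV
  exact ⟨hV1, hF, fun zh hzh => hV3 zh (hzh.trans_le hz),
    fun y hy hgy => hV4 y hy (hgy.trans_le hz)⟩

-- (V3) at `ẑ = g x`.
theorem Valid.exists_mem_le (hV : K.Valid F f) {x : Fin n → ℝ} (hx : x ∈ ⋂₀ K.core)
    (hlt : (K.g x : WithTop ℝ) < K.z) : ∃ y ∈ F, f y ≤ K.g x :=
  (hV.2.2.1 (K.g x) hlt).mpr ⟨x, hx, le_rfl⟩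

end Config

/-- objective bound update rule: if `(𝒞, 𝒟, g, z, T, ε)` is
`(F, f)`-valid and `x ∈ ⋂𝒞` has `g x = z' < z`, then `(𝒞, 𝒟, g, z', T, ε)` is
also `(F, f)`-valid. -/
theorem objective_bound_update {n : ℕ} (F : Set (Fin n → ℝ))
    (f : (Fin n → ℝ) → ℝ) (K : Config n) (hV : K.Valid F f)
    (x : Fin n → ℝ) (hx : x ∈ ⋂₀ K.core) (z' : ℝ)
    (hgx : K.g x = z') (hlt : (z' : WithTop ℝ) < K.z) :
    Config.Valid F f
      { core := K.core, derived := K.derived, g := K.g, z := (z' : WithTop ℝ),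
        tree := K.tree, eps := K.eps } := by
  subst hgx
  obtain ⟨y, hyF, hfy⟩ := hV.exists_mem_le hx hlt
  exact hV.of_z_le hlt.le fun _ => ⟨y, hyF, WithTop.coe_le_coe.mpr hfy⟩
end

section
/- (Transfer rule.) Let (𝒞, 𝒟, g, z, T, ε) be an (F, f)-valid configuration and let C ∈ 𝒟. Then (𝒞 ∪ {C}, 𝒟 \ {C}, g, z, T, ε) is also (F, f)-valid. -/
open Set

namespace BranchingTree

variable {n : ℕ} (T : BranchingTree n)

theorem region_insert (C : Set (Fin n → ℝ)) (𝒞 : Set (Set (Fin n → ℝ))) (w : T.V) :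
    T.region (insert C 𝒞) w = C ∩ T.region 𝒞 w := by
  rw [region, insert_union, sInter_insert, region]

variable {T}

theorem Consistent.mono {𝒞 𝒞' : Set (Set (Fin n → ℝ))} (h : T.Consistent 𝒞)
    (hsub : ⋂₀ 𝒞' ⊆ ⋂₀ 𝒞) : T.Consistent 𝒞' := by
  obtain ⟨hcover, hprefix, hbdd, hdisj⟩ := h
  exact ⟨fun u hu => hsub.trans (hcover u hu), hprefix,
    fun v i => (hbdd v i).mono (image_mono hsub), hdisj⟩

theorem IsDCN.insert {𝒞 : Set (Set (Fin n → ℝ))} {C : Set (Fin n → ℝ)} {v : T.V}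
    {x y : Fin n → ℝ} (h : T.IsDCN 𝒞 v x y) (hx : x ∈ C) (hy : y ∈ C) :
    T.IsDCN (insert C 𝒞) v x y := by
  obtain ⟨hxv, hyv, hdeepest⟩ := h
  simp only [IsDCN, region_insert]
  exact ⟨⟨hx, hxv⟩, ⟨hy, hyv⟩, fun w hxw hyw => hdeepest w hxw.2 hyw.2⟩

theorem TreeGe.insert {𝒞 : Set (Set (Fin n → ℝ))} {C : Set (Fin n → ℝ)} {ε : ℝ}
    {x y : Fin n → ℝ} (h : T.TreeGe 𝒞 ε x y) (hx : x ∈ C) (hy : y ∈ C) :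
    T.TreeGe (insert C 𝒞) ε x y :=
  let ⟨v, hv, hge⟩ := h
  ⟨v, hv.insert hx hy, hge⟩

end BranchingTree

theorem Config.Valid.exists_mem_sInter_union_le {n : ℕ} {F : Set (Fin n → ℝ)}
    {f : (Fin n → ℝ) → ℝ} {K : Config n} (hV : K.Valid F f) {zh : ℝ}
    (hzh : (zh : WithTop ℝ) < K.z) {x : Fin n → ℝ} (hx : x ∈ ⋂₀ K.core)
    (hgx : K.g x ≤ zh) : ∃ y ∈ ⋂₀ (K.core ∪ K.derived), K.g y ≤ zh := by
  have hgxz : (K.g x : WithTop ℝ) < K.z := (WithTop.coe_le_coe.mpr hgx).trans_lt hzh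
  obtain ⟨y, hy, -, hgy⟩ := hV.2.2.2 x hx hgxz
  exact ⟨y, hy, hgy.trans hgx⟩

theorem insert_union_diff_singleton {α : Type*} {a : α} {s t : Set α} (ha : a ∈ t) :
    insert a s ∪ (t \ {a}) = s ∪ t := by
  rw [insert_union, ← union_insert, insert_sdiff_singleton, insert_eq_of_mem ha]

/-- transfer rule: if `(𝒞, 𝒟, g, z, T, ε)` is `(F, f)`-valid
and `C ∈ 𝒟`, then `(𝒞 ∪ {C}, 𝒟 \ {C}, g, z, T, ε)` is also `(F, f)`-valid. -/
theorem transfer {n : ℕ} (F : Set (Fin n → ℝ)) (f : (Fin n → ℝ) → ℝ)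
    (K : Config n) (hV : K.Valid F f) (C : Set (Fin n → ℝ)) (hC : C ∈ K.derived) :
    Config.Valid F f
      { core := insert C K.core, derived := K.derived \ {C}, g := K.g, z := K.z,
        tree := K.tree, eps := K.eps } := by
  obtain ⟨⟨hT, hε⟩, hV2, hV3, hV4⟩ := id hV
  have hcore : ⋂₀ insert C K.core ⊆ ⋂₀ K.core := sInter_subset_sInter (subset_insert _ _)
  have hall : insert C K.core ∪ (K.derived \ {C}) = K.core ∪ K.derived :=
    insert_union_diff_singleton hC
  have hall_core : ⋂₀ (K.core ∪ K.derived) ⊆ ⋂₀ insert C K.core :=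
    sInter_subset_sInter (insert_subset (mem_union_right _ hC) subset_union_left)
  refine ⟨⟨hT.mono hcore, hε⟩, hV2, fun zh hzh => ⟨fun hF => ?_, fun ⟨x, hx, hgx⟩ => ?_⟩, ?_⟩
  · obtain ⟨x, hx, hgx⟩ := (hV3 zh hzh).mp hF
    obtain ⟨y, hy, hgy⟩ := hV.exists_mem_sInter_union_le hzh hx hgx
    exact ⟨y, hall_core hy, hgy⟩
  · exact (hV3 zh hzh).mpr ⟨x, hcore hx, hgx⟩
  · intro x hx hgx
    obtain ⟨y, hy, hge, hgy⟩ := hV4 x (hcore hx) hgx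
    exact ⟨y, hall ▸ hy,
      hge.insert (hy C (mem_union_right _ hC)) (hx C (mem_insert _ _)), hgy⟩
end

section
/- (Deletion rule, redundant core constraint.) Let (𝒞, 𝒟, g, z, T, ε) be an (F, f)-valid configuration, let C ∈ 𝒞, set 𝒞' = 𝒞 \ {C}, and let 𝒟' ⊆ 𝒟. If C ⊇ ⋂𝒞', then (𝒞', 𝒟', g, z, T, ε) is also (F, f)-valid. -/
open Set

/-!
Every ingredient of validity — consistency of the tree, the feasible regions of its nodes,
deepest common nodes, the order `⪰_T`, and conditions (V3), (V4) — depends on the core `𝒞`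
only through `⋂𝒞`. Removing a member `C ⊇ ⋂(𝒞 \ {C})` leaves `⋂𝒞` unchanged, and shrinking
`𝒟` only enlarges `⋂(𝒞 ∪ 𝒟)`, so every witness required by (V4) is still admissible.
-/

theorem Set.sInter_sdiff_singleton_of_sInter_subset {α : Type*} {𝒮 : Set (Set α)} {C : Set α}
    (hC : C ∈ 𝒮) (hred : ⋂₀ (𝒮 \ {C}) ⊆ C) : ⋂₀ (𝒮 \ {C}) = ⋂₀ 𝒮 := by
  conv_rhs => rw [← insert_sdiff_self_of_mem hC, sInter_insert]
  exact (inter_eq_right.mpr hred).symm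

namespace BranchingTree

variable {n : ℕ} (T : BranchingTree n) {𝒞 𝒞' : Set (Set (Fin n → ℝ))}

theorem region_eq_of_sInter_eq (h : ⋂₀ 𝒞 = ⋂₀ 𝒞') (v : T.V) :
    T.region 𝒞 v = T.region 𝒞' v := by
  simp only [region, sInter_union, h]

theorem consistent_iff_of_sInter_eq (h : ⋂₀ 𝒞 = ⋂₀ 𝒞') :
    T.Consistent 𝒞 ↔ T.Consistent 𝒞' := by
  rw [Consistent, Consistent, h]

theorem isDCN_iff_of_sInter_eq (h : ⋂₀ 𝒞 = ⋂₀ 𝒞') (v : T.V) (x y : Fin n → ℝ) :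
    T.IsDCN 𝒞 v x y ↔ T.IsDCN 𝒞' v x y := by
  simp only [IsDCN, T.region_eq_of_sInter_eq h]

theorem treeGe_iff_of_sInter_eq (h : ⋂₀ 𝒞 = ⋂₀ 𝒞') (ε : ℝ) (x y : Fin n → ℝ) :
    T.TreeGe 𝒞 ε x y ↔ T.TreeGe 𝒞' ε x y := by
  simp only [TreeGe, T.isDCN_iff_of_sInter_eq h]

end BranchingTree

theorem Config.Valid.of_sInter_core_eq {n : ℕ} {F : Set (Fin n → ℝ)} {f : (Fin n → ℝ) → ℝ}
    {K : Config n} (hK : K.Valid F f) {𝒞' 𝒟' : Set (Set (Fin n → ℝ))}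
    (hcore : ⋂₀ 𝒞' = ⋂₀ K.core) (hderived : 𝒟' ⊆ K.derived) :
    Config.Valid F f { K with core := 𝒞', derived := 𝒟' } := by
  obtain ⟨⟨hcons, heps⟩, hV2, hV3, hV4⟩ := hK
  refine ⟨⟨(K.tree.consistent_iff_of_sInter_eq hcore).mpr hcons, heps⟩, hV2, ?_, ?_⟩
  · intro zh hzh
    simpa only [hcore] using hV3 zh hzh
  · intro x hx hgx
    obtain ⟨y, hy, hyx, hgy⟩ := hV4 x (hcore ▸ hx) hgx
    refine ⟨y, ?_, (K.tree.treeGe_iff_of_sInter_eq hcore _ y x).mpr hyx, hgy⟩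
    rw [sInter_union] at hy ⊢
    exact ⟨hcore ▸ hy.1, sInter_subset_sInter hderived hy.2⟩

/-- deletion rule, redundant core constraint: if
`(𝒞, 𝒟, g, z, T, ε)` is `(F, f)`-valid, `C ∈ 𝒞`, `𝒞' = 𝒞 \ {C}`, `𝒟' ⊆ 𝒟`,
and `C ⊇ ⋂𝒞'`, then `(𝒞', 𝒟', g, z, T, ε)` is also `(F, f)`-valid. -/
theorem deletion_redundant_core {n : ℕ} (F : Set (Fin n → ℝ))
    (f : (Fin n → ℝ) → ℝ) (K : Config n) (hV : K.Valid F f)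
    (C : Set (Fin n → ℝ)) (hC : C ∈ K.core) (𝒟' : Set (Set (Fin n → ℝ)))
    (h𝒟 : 𝒟' ⊆ K.derived) (hred : ⋂₀ (K.core \ {C}) ⊆ C) :
    Config.Valid F f
      { core := K.core \ {C}, derived := 𝒟', g := K.g, z := K.z,
        tree := K.tree, eps := K.eps } :=
  hV.of_sInter_core_eq (sInter_sdiff_singleton_of_sInter_subset hC hred) h𝒟
end

section
/- (Dimension extension rule.) Let (𝒞, 𝒟, g, z, T, ε) be an (F, f)-valid configuration in dimension n. Define 𝒞' = {C × ℝ : C ∈ 𝒞}, 𝒟' = {C × ℝ : C ∈ 𝒟}, g' : ℝ^{n+1} → ℝ by g'(x_1,…,x_{n+1}) = g(x_1,…,x_n), and T' = (V, E, B', σ) with B'_v = B_v × ℝ for all v ∈ V. Then (𝒞', 𝒟', g', z, T', ε) is an (F, f)-valid configuration (with F, f regarded via the embedding that ignores the last coordinate, i.e. conditions (V2) and (V3) refer to the original F ⊆ ℝ^n and f : ℝ^n → ℝ). -/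
open Set

/-- The cylinder `C × ℝ ⊆ ℝ^{n+1}` over a constraint `C ⊆ ℝⁿ`. -/
def extendSet {n : ℕ} (C : Set (Fin n → ℝ)) : Set (Fin (n + 1) → ℝ) :=
  {x | (fun i : Fin n => x i.castSucc) ∈ C}

/-- The branching tree in dimension `n + 1` obtained from `T` by replacing each
branching constraint `B v` by `B v × ℝ` (the node set, edges and signed index
lists are unchanged, the indices being reinterpreted in dimension `n + 1`). -/
def extendTree {n : ℕ} (T : BranchingTree n) : BranchingTree (n + 1) where
  V := T.V
  fin := T.fin
  root := T.root
  parent := T.parent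
  parent_root := T.parent_root
  parent_isSome := T.parent_isSome
  reach_root := T.reach_root
  B := fun v => extendSet (T.B v)
  B_root := by
    ext x
    simp [extendSet, T.B_root]
  sig := fun v => (T.sig v).map (fun p => (p.1.castSucc, p.2))
  sig_nodup := fun v => by
    have h : ((T.sig v).map (fun p : Fin n × Bool => ((p.1.castSucc, p.2) : Fin (n + 1) × Bool))).map
        Prod.fst = ((T.sig v).map Prod.fst).map Fin.castSucc := by
      simp [List.map_map]
    rw [h]
    exact (T.sig_nodup v).map (Fin.castSucc_injective n)

/-- The configuration `(𝒞', 𝒟', g', z, T', ε)` in dimension `n + 1` obtained by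
introducing one new variable: `𝒞' = {C × ℝ : C ∈ 𝒞}`, `𝒟' = {C × ℝ : C ∈ 𝒟}`,
`g'(x₁,…,x_{n+1}) = g(x₁,…,x_n)`, and `T'` has `B' v = B v × ℝ`. -/
noncomputable def extendConfig {n : ℕ} (K : Config n) : Config (n + 1) where
  core := extendSet '' K.core
  derived := extendSet '' K.derived
  g := fun x => K.g (fun i : Fin n => x i.castSucc)
  z := K.z
  tree := extendTree K.tree
  eps := K.eps


/-
Every constraint of the extended configuration is the cylinder `Fin.init ⁻¹' C` over a
constraint of the original one, and the extended tree has the same nodes and reads only the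
first `n` coordinates. So everything the validity conditions say about a point `x ∈ ℝ^{n+1}`
is what they say about `Fin.init x ∈ ℝⁿ`, and every point of `ℝⁿ` is of this form
(`Fin.init (Fin.snoc y c) = y`).
-/

theorem sInter_image_extendSet {n : ℕ} (𝒜 : Set (Set (Fin n → ℝ))) :
    ⋂₀ (extendSet '' 𝒜) = Fin.init ⁻¹' ⋂₀ 𝒜 := by
  rw [sInter_image, preimage_sInter]
  rfl

theorem exists_mem_sInter_image_extendSet_iff {n : ℕ} (𝒜 : Set (Set (Fin n → ℝ)))
    (P : (Fin n → ℝ) → Prop) :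
    (∃ x ∈ ⋂₀ (extendSet '' 𝒜), P (Fin.init x)) ↔ ∃ y ∈ ⋂₀ 𝒜, P y := by
  rw [sInter_image_extendSet]
  refine ⟨fun ⟨x, hx, hP⟩ => ⟨Fin.init x, hx, hP⟩, fun ⟨y, hy, hP⟩ => ⟨Fin.snoc y 0, ?_, ?_⟩⟩
  · rwa [mem_preimage, Fin.init_snoc]
  · rwa [Fin.init_snoc]

namespace BranchingTree

variable {n : ℕ} (T : BranchingTree n)

theorem sigApply_extendTree_sig (v : T.V) (x : Fin (n + 1) → ℝ) :
    sigApply ((extendTree T).sig v) x = sigApply (T.sig v) (Fin.init x) := by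
  simp [sigApply, extendTree, Fin.init]

theorem extendTree_region (𝒞 : Set (Set (Fin n → ℝ))) (v : T.V) :
    (extendTree T).region (extendSet '' 𝒞) v = Fin.init ⁻¹' T.region 𝒞 v := by
  have hpath : (extendTree T).pathCons v = extendSet '' T.pathCons v := by
    unfold pathCons
    rw [← image_comp]
    rfl
  unfold region
  rw [hpath, ← image_union, sInter_image_extendSet]

theorem extendTree_isDCN_iff (𝒞 : Set (Set (Fin n → ℝ))) (v : T.V) (x y : Fin (n + 1) → ℝ) :
    (extendTree T).IsDCN (extendSet '' 𝒞) v x y ↔ T.IsDCN 𝒞 v (Fin.init x) (Fin.init y) := by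
  have hregion (w : T.V) (p : Fin (n + 1) → ℝ) :
      p ∈ (extendTree T).region (extendSet '' 𝒞) w ↔ Fin.init p ∈ T.region 𝒞 w := by
    rw [extendTree_region]
    rfl
  exact and_congr (hregion v x) (and_congr (hregion v y)
    (forall_congr' fun w => imp_congr (hregion w x) (imp_congr (hregion w y) Iff.rfl)))

theorem extendTree_treeGe_iff (𝒞 : Set (Set (Fin n → ℝ))) (ε : ℝ) (x y : Fin (n + 1) → ℝ) :
    (extendTree T).TreeGe (extendSet '' 𝒞) ε x y ↔ T.TreeGe 𝒞 ε (Fin.init x) (Fin.init y) := by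
  refine exists_congr fun v => ?_
  rw [extendTree_isDCN_iff T 𝒞 v, sigApply_extendTree_sig T v, sigApply_extendTree_sig T v]

variable {T} in
theorem consistent_extendTree {𝒞 : Set (Set (Fin n → ℝ))} (hT : T.Consistent 𝒞) :
    (extendTree T).Consistent (extendSet '' 𝒞) := by
  obtain ⟨hcover, hprefix, hbdd, hdisj⟩ := hT
  refine ⟨?_, fun u v hv => (hprefix u v hv).map _, ?_, ?_⟩
  · intro u hu x hx
    rw [sInter_image_extendSet] at hx
    obtain ⟨v, hv, hxv⟩ := mem_iUnion₂.mp (hcover u hu hx)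
    exact mem_iUnion₂.mpr ⟨v, hv, hxv⟩
  · intro v i
    obtain ⟨M, hM⟩ := hbdd v (i.cast (by simp [extendTree]))
    refine ⟨M, ?_⟩
    rintro _ ⟨x, hx, rfl⟩
    rw [sInter_image_extendSet] at hx
    convert hM ⟨Fin.init x, hx, rfl⟩ using 1
    simp only [List.get_eq_getElem]
    simp only [extendTree, List.getElem_map]
    rfl
  · intro u v w hv hw hvw
    have hsub : ∀ b : T.V, sigApply ((extendTree T).sig u) '' (extendTree T).B b ⊆
        sigApply (T.sig u) '' T.B b := by
      rintro b _ ⟨x, hx, rfl⟩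
      exact ⟨Fin.init x, hx, (sigApply_extendTree_sig T u x).symm⟩
    exact subset_empty_iff.mp (hdisj u v w hv hw hvw ▸ inter_subset_inter (hsub v) (hsub w))

end BranchingTree

open BranchingTree

/-- dimension extension rule: if `(𝒞, 𝒟, g, z, T, ε)` is
`(F, f)`-valid in dimension `n`, then the extended configuration
`(𝒞', 𝒟', g', z, T', ε)` in dimension `n + 1` satisfies all four validity
conditions, where (V2) and (V3) refer to the original `F ⊆ ℝⁿ` and
`f : ℝⁿ → ℝ`. -/
theorem dimension_extension {n : ℕ} (F : Set (Fin n → ℝ))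
    (f : (Fin n → ℝ) → ℝ) (K : Config n) (hV : K.Valid F f) :
    ((extendConfig K).tree.Consistent (extendConfig K).core ∧
      0 < (extendConfig K).eps) ∧
    ((extendConfig K).z < ⊤ → ∃ x ∈ F, (f x : WithTop ℝ) ≤ (extendConfig K).z) ∧
    (∀ zh : ℝ, (zh : WithTop ℝ) < (extendConfig K).z →
      ((∃ x ∈ F, f x ≤ zh) ↔
        ∃ x ∈ ⋂₀ (extendConfig K).core, (extendConfig K).g x ≤ zh)) ∧
    (∀ x ∈ ⋂₀ (extendConfig K).core,
      ((extendConfig K).g x : WithTop ℝ) < (extendConfig K).z →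
      ∃ y ∈ ⋂₀ ((extendConfig K).core ∪ (extendConfig K).derived),
        (extendConfig K).tree.TreeGe (extendConfig K).core (extendConfig K).eps y x ∧
        (extendConfig K).g y ≤ (extendConfig K).g x) := by
  obtain ⟨⟨hT, heps⟩, hV2, hV3, hV4⟩ := hV
  refine ⟨⟨consistent_extendTree hT, heps⟩, hV2, fun zh hzh => ?_, fun x hx hgx => ?_⟩
  · rw [hV3 zh hzh]
    exact (exists_mem_sInter_image_extendSet_iff K.core (K.g · ≤ zh)).symm
  · simp only [extendConfig, sInter_image_extendSet] at hx hgx ⊢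
    obtain ⟨y, hy, hge, hgy⟩ := hV4 (Fin.init x) hx hgx
    refine ⟨Fin.snoc y (x (Fin.last n)), ?_, ?_, ?_⟩
    · rw [← image_union, sInter_image_extendSet, mem_preimage, Fin.init_snoc]
      exact hy
    · rw [extendTree_treeGe_iff, Fin.init_snoc]
      exact hge
    · exact (congrArg K.g (Fin.init_snoc _ _)).trans_le hgy
end
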